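/- arXiv:math-ph/0406026 — 3 statements merged into one kernel-verified Lean document; each statement's English description precedes it below -/
import Mathlib

section
/- Let ω ∈ ℝ^l satisfy the diophantine condition |⟨ω,k⟩| ≥ γ|k|^{-τ} for all nonzero k ∈ ℤ^l, with γ > 0 and τ > 0. If (g_k)_{k∈ℤ^l} are complex numbers with Σ_k e^{ρ|k|}|g_k| < ∞ and g_0 = 0, then the series w := Σ_{k≠0} g_k/(i⟨ω,k⟩) satisfies Σ_k e^{(ρ-d)|k|}|w_k| ≤ (τ/e)^τ γ^{-1} d^{-τ} Σ_k e^{ρ|k|}|g_k| for any 0 < d < ρ, where w_k = g_k/(i⟨ω,k⟩). -/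
open Real Finset Complex

/-!
Dividing by the small divisor `⟨ω,k⟩` costs at most a factor `γ⁻¹ |k|^τ` by the diophantine
condition, while shrinking the strip from `ρ` to `ρ - d` gains a factor `e^{-d|k|}`, and
`|k|^τ e^{-d|k|} ≤ (τ/(ed))^τ`. So the weighted bound holds coefficientwise, and summing it
gives the claim.
-/

theorem Real.rpow_mul_exp_neg_mul_le {τ d y : ℝ} (hτ : 0 < τ) (hd : 0 < d) (hy : 0 ≤ y) :
    y ^ τ * exp (-(d * y)) ≤ (τ / exp 1) ^ τ * d ^ (-τ) := by
  -- `t ≤ e^{t-1}` at `t = d y / τ`, raised to the power `τ`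
  have hbase : d * y / τ ≤ exp (d * y / τ - 1) := by
    linarith [add_one_le_exp (d * y / τ - 1)]
  have hpow := rpow_le_rpow (by positivity) hbase hτ.le
  rw [← exp_mul, div_rpow (by positivity) hτ.le, mul_rpow hd.le hy,
    show (d * y / τ - 1) * τ = d * y - τ by field_simp, exp_sub,
    div_le_div_iff₀ (by positivity) (exp_pos τ)] at hpow
  rw [div_rpow hτ.le (exp_pos 1).le, exp_one_rpow, rpow_neg hd.le, exp_neg]
  have hdτ : 0 < d ^ τ := rpow_pos_of_pos hd τ
  calc y ^ τ * (exp (d * y))⁻¹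
      = d ^ τ * y ^ τ * exp τ * (exp (d * y) * exp τ * d ^ τ)⁻¹ := by field_simp
    _ ≤ exp (d * y) * τ ^ τ * (exp (d * y) * exp τ * d ^ τ)⁻¹ := by gcongr
    _ = τ ^ τ / exp τ * (d ^ τ)⁻¹ := by field_simp

theorem Complex.norm_div_I_mul_ofReal (z : ℂ) (a : ℝ) : ‖z / (I * a)‖ = ‖z‖ / |a| := by
  rw [norm_div, norm_mul, norm_I, one_mul, norm_real, Real.norm_eq_abs]

theorem sum_abs_pos_of_ne_zero {ι : Type*} [Fintype ι] {k : ι → ℤ} (hk : k ≠ 0) :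
    0 < ∑ i, (|k i| : ℝ) := by
  obtain ⟨i, hi⟩ := Function.ne_iff.mp hk
  refine sum_pos' (fun j _ => by positivity) ⟨i, mem_univ i, ?_⟩
  exact_mod_cast abs_pos.mpr hi

/-- The coefficientwise bound, with `S = |k|` and `a = ⟨ω,k⟩`. -/
theorem exp_mul_norm_div_small_divisor_le {γ τ d ρ S a : ℝ} (z : ℂ) (hγ : 0 < γ) (hτ : 0 < τ)
    (hd : 0 < d) (hS : 0 < S) (hdio : γ * S ^ (-τ) ≤ |a|) :
    Real.exp ((ρ - d) * S) * ‖z / (I * a)‖ ≤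
      (τ / Real.exp 1) ^ τ * γ⁻¹ * d ^ (-τ) * (Real.exp (ρ * S) * ‖z‖) := by
  have hdiv : ‖z / (I * a)‖ ≤ γ⁻¹ * S ^ τ * ‖z‖ := by
    rw [norm_div_I_mul_ofReal, div_le_iff₀ (lt_of_lt_of_le (by positivity) hdio)]
    calc ‖z‖ = γ⁻¹ * S ^ τ * ‖z‖ * (γ * S ^ (-τ)) := by
          rw [rpow_neg hS.le]; field_simp
      _ ≤ γ⁻¹ * S ^ τ * ‖z‖ * |a| := by gcongr
  calc Real.exp ((ρ - d) * S) * ‖z / (I * a)‖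
      ≤ Real.exp ((ρ - d) * S) * (γ⁻¹ * S ^ τ * ‖z‖) := by gcongr
    _ = γ⁻¹ * (S ^ τ * Real.exp (-(d * S))) * (Real.exp (ρ * S) * ‖z‖) := by
        rw [show (ρ - d) * S = ρ * S + -(d * S) by ring, Real.exp_add]; ring
    _ ≤ γ⁻¹ * ((τ / Real.exp 1) ^ τ * d ^ (-τ)) * (Real.exp (ρ * S) * ‖z‖) := by
        gcongr γ⁻¹ * ?_ * _; exact rpow_mul_exp_neg_mul_le hτ hd hS.le
    _ = (τ / Real.exp 1) ^ τ * γ⁻¹ * d ^ (-τ) * (Real.exp (ρ * S) * ‖z‖) := by ring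

theorem stmt_2_general (l : ℕ) (ω : Fin l → ℝ) (γ τ : ℝ) (hγ : 0 < γ) (hτ : 0 < τ)
    (hdio : ∀ k : Fin l → ℤ, k ≠ 0 →
      γ * (∑ i, (|k i| : ℝ)) ^ (-τ) ≤ |∑ i, ω i * (k i : ℝ)|)
    (g : (Fin l → ℤ) → ℂ) (ρ d : ℝ) (hd : 0 < d)
    (hg : Summable fun k : Fin l → ℤ =>
      Real.exp (ρ * ∑ i, (|k i| : ℝ)) * ‖g k‖)
    (w : (Fin l → ℤ) → ℂ)
    (hw : ∀ k : Fin l → ℤ, k ≠ 0 →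
      w k = g k / (Complex.I * (∑ i, ω i * (k i : ℝ) : ℝ)))
    (hw0 : w 0 = 0) :
    Summable (fun k : Fin l → ℤ =>
      Real.exp ((ρ - d) * ∑ i, (|k i| : ℝ)) * ‖w k‖) ∧
    (∑' k : Fin l → ℤ, Real.exp ((ρ - d) * ∑ i, (|k i| : ℝ)) * ‖w k‖) ≤
      (τ / Real.exp 1) ^ τ * γ⁻¹ * d ^ (-τ) *
        ∑' k : Fin l → ℤ, Real.exp (ρ * ∑ i, (|k i| : ℝ)) * ‖g k‖ := by
  set C := (τ / Real.exp 1) ^ τ * γ⁻¹ * d ^ (-τ)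
  have hterm : ∀ k : Fin l → ℤ, Real.exp ((ρ - d) * ∑ i, (|k i| : ℝ)) * ‖w k‖ ≤
      C * (Real.exp (ρ * ∑ i, (|k i| : ℝ)) * ‖g k‖) := by
    intro k
    rcases eq_or_ne k 0 with rfl | hk
    · rw [hw0, norm_zero, mul_zero]
      positivity
    · rw [hw k hk]
      exact exp_mul_norm_div_small_divisor_le _ hγ hτ hd (sum_abs_pos_of_ne_zero hk) (hdio k hk)
  have hsum := (hg.mul_left C).of_nonneg_of_le (fun k => by positivity) hterm
  exact ⟨hsum, (hsum.tsum_le_tsum hterm (hg.mul_left C)).trans_eq tsum_mul_left⟩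

/-- solution of the homological equation on the Fourier side.
If ω is (γ,τ)-diophantine, Σ e^{ρ|k|}|g_k| < ∞ and g₀ = 0, then the coefficients
w_k = g_k/(i⟨ω,k⟩) (k ≠ 0) satisfy
Σ e^{(ρ-d)|k|}|w_k| ≤ (τ/e)^τ γ⁻¹ d^{-τ} Σ e^{ρ|k|}|g_k| for 0 < d < ρ. -/
theorem stmt_2 (l : ℕ) (ω : Fin l → ℝ) (γ τ : ℝ) (hγ : 0 < γ) (hτ : 0 < τ)
    (hdio : ∀ k : Fin l → ℤ, k ≠ 0 →
      γ * (∑ i, (|k i| : ℝ)) ^ (-τ) ≤ |∑ i, ω i * (k i : ℝ)|)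
    (g : (Fin l → ℤ) → ℂ) (ρ d : ℝ) (hd : 0 < d) (hdρ : d < ρ)
    (hg : Summable fun k : Fin l → ℤ =>
      Real.exp (ρ * ∑ i, (|k i| : ℝ)) * ‖g k‖)
    (hg0 : g 0 = 0)
    (w : (Fin l → ℤ) → ℂ)
    (hw : ∀ k : Fin l → ℤ, k ≠ 0 →
      w k = g k / (Complex.I * (∑ i, ω i * (k i : ℝ) : ℝ)))
    (hw0 : w 0 = 0) :
    Summable (fun k : Fin l → ℤ =>
      Real.exp ((ρ - d) * ∑ i, (|k i| : ℝ)) * ‖w k‖) ∧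
    (∑' k : Fin l → ℤ, Real.exp ((ρ - d) * ∑ i, (|k i| : ℝ)) * ‖w k‖) ≤
      (τ / Real.exp 1) ^ τ * γ⁻¹ * d ^ (-τ) *
        ∑' k : Fin l → ℤ, Real.exp (ρ * ∑ i, (|k i| : ℝ)) * ‖g k‖ :=
  stmt_2_general l ω γ τ hγ hτ hdio g ρ d hd hg w hw hw0
end

section
/- Let γ₀ = γ > 0 and define γ_p = γ_{p-1} - ε_p (1 + K_{p-1}^τ) where ε_p = ε^{2^{p-1}} M_p, K_p = pK, and M_p ≤ (4p²/ρ)^{2τp}(4p²/σ)^{2p} M^{2^p}. Then for ε > 0 small enough (depending on γ, K, τ, ρ, σ, M), the sequence γ_p is decreasing, remains bounded below by γ/2, and converges to a positive limit γ_∞. -/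
/-!
Since `p² ≤ 4 · 2^{p-1}`, each factor `(4p²/ρ)^{2τp}`, `(4p²/σ)^{2p}`, `M^{2^p}` and
`1 + ((p-1)K)^τ` of the weight is at most `C^{2^{p-1}}`, so the weight is dominated by a
double exponential `B^{2^{p-1}}`. Hence for `ε B ≤ 1/2` the `p`-th decrement is at most
`(εB)^{2^{p-1}} ≤ εB 2^{1-p}`, so the total decrement is at most `2εB`, which is `≤ γ/2`
once `ε` is small. The sequence `γ_p` decreases by these nonnegative, summable steps.
-/

open Real Filter Topology Finset

lemma Nat.succ_sq_le_four_mul_two_pow (k : ℕ) : (k + 1) ^ 2 ≤ 4 * 2 ^ k := by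
  induction k with
  | zero => norm_num
  | succ k ih =>
    have hk : k < 2 ^ k := Nat.lt_two_pow_self
    have h2 : 2 ^ (k + 1) = 2 * 2 ^ k := Nat.pow_succ'
    nlinarith

lemma Nat.four_mul_succ_sq_le_sixteen_pow (k : ℕ) : 4 * (k + 1) ^ 2 ≤ 16 ^ (k + 1) := by
  have h2 : 2 ^ k ≤ 16 ^ k := Nat.pow_le_pow_left (by norm_num) k
  have h16 : 16 ^ (k + 1) = 16 * 16 ^ k := Nat.pow_succ'
  linarith [Nat.succ_sq_le_four_mul_two_pow k]

lemma four_mul_sq_div_le_pow {c : ℝ} (hc : 0 < c) (k : ℕ) :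
    4 * ((k + 1 : ℕ) : ℝ) ^ 2 / c ≤ (16 / min c 1) ^ (k + 1) := by
  have hm : 0 < min c 1 := lt_min hc one_pos
  rw [div_pow]
  refine div_le_div₀ (by positivity) ?_ (by positivity) ?_
  · exact_mod_cast Nat.four_mul_succ_sq_le_sixteen_pow k
  · calc min c 1 ^ (k + 1) ≤ min c 1 := pow_le_of_le_one hm.le (min_le_right c 1) k.succ_ne_zero
      _ ≤ c := min_le_left c 1

lemma four_mul_sq_div_rpow_le {c x : ℝ} (hc : 0 < c) (hx : 0 ≤ x) (k : ℕ) :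
    (4 * ((k + 1 : ℕ) : ℝ) ^ 2 / c) ^ (x * (k + 1 : ℕ)) ≤
      ((16 / min c 1) ^ (4 * x)) ^ 2 ^ k := by
  set a := 16 / min c 1
  have ha : 1 ≤ a := (one_le_div (lt_min hc one_pos)).2 ((min_le_right c 1).trans (by norm_num))
  have hsq : ((k + 1 : ℕ) : ℝ) ^ 2 ≤ 4 * 2 ^ k := by
    exact_mod_cast Nat.succ_sq_le_four_mul_two_pow k
  calc (4 * ((k + 1 : ℕ) : ℝ) ^ 2 / c) ^ (x * (k + 1 : ℕ))
      ≤ (a ^ (k + 1)) ^ (x * (k + 1 : ℕ)) :=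
        rpow_le_rpow (by positivity) (four_mul_sq_div_le_pow hc k) (by positivity)
    _ = a ^ (x * ((k + 1 : ℕ) : ℝ) ^ 2) := by
        rw [← rpow_natCast a (k + 1), ← rpow_mul (by positivity)]
        ring_nf
    _ ≤ a ^ (4 * x * 2 ^ k) := by
        apply rpow_le_rpow_of_exponent_le ha
        nlinarith
    _ = (a ^ (4 * x)) ^ 2 ^ k := by
        rw [rpow_mul (by positivity), ← rpow_natCast]
        norm_cast

lemma one_add_mul_rpow_le {t τ : ℝ} (ht : 0 ≤ t) (hτ : 0 ≤ τ) (k : ℕ) :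
    1 + (k * t) ^ τ ≤ (2 * (1 + t) ^ τ) ^ 2 ^ k := by
  set X := (1 + t) ^ τ
  have hX : 1 ≤ X := one_le_rpow (by linarith) hτ
  have hkt : k * t ≤ (1 + t) ^ 2 ^ k :=
    calc k * t ≤ 1 + k * t := by linarith
      _ ≤ (1 + t) ^ k := one_add_mul_le_pow (by linarith) k
      _ ≤ (1 + t) ^ 2 ^ k := pow_le_pow_right₀ (by linarith) Nat.lt_two_pow_self.le
  have hpow : (k * t) ^ τ ≤ X ^ 2 ^ k :=
    calc (k * t) ^ τ ≤ ((1 + t) ^ 2 ^ k) ^ τ := rpow_le_rpow (by positivity) hkt hτ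
      _ = X ^ 2 ^ k := (rpow_pow_comm (by linarith) _ _).symm
  calc 1 + (k * t) ^ τ ≤ 2 * X ^ 2 ^ k := by linarith [one_le_pow₀ hX (n := 2 ^ k)]
    _ ≤ 2 ^ 2 ^ k * X ^ 2 ^ k := by
        gcongr
        exact le_self_pow₀ one_le_two (by positivity)
    _ = (2 * X) ^ 2 ^ k := (mul_pow _ _ _).symm

lemma exists_pos_mul_le_pow_two_pow {K τ ρ σ M : ℝ} (hK : 0 ≤ K) (hτ : 0 ≤ τ)
    (hρ : 0 < ρ) (hσ : 0 < σ) (hM : M ≠ 0) {Mp : ℕ → ℝ}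
    (hMp : ∀ p : ℕ, 1 ≤ p →
      Mp p ≤ (4 * (p : ℝ) ^ 2 / ρ) ^ (2 * τ * p) * (4 * (p : ℝ) ^ 2 / σ) ^ (2 * p) *
        M ^ (2 ^ p)) :
    ∃ B : ℝ, 0 < B ∧ ∀ k : ℕ, Mp (k + 1) * (1 + (k * K) ^ τ) ≤ B ^ 2 ^ k := by
  refine ⟨(16 / min ρ 1) ^ (4 * (2 * τ)) * (16 / min σ 1) ^ (4 * 2 : ℝ) * M ^ 2 *
    (2 * (1 + K) ^ τ), by positivity, fun k => ?_⟩
  have hρk := four_mul_sq_div_rpow_le hρ (by positivity : 0 ≤ 2 * τ) k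
  have hσk : (4 * ((k + 1 : ℕ) : ℝ) ^ 2 / σ) ^ (2 * (k + 1)) ≤
      ((16 / min σ 1) ^ (4 * 2 : ℝ)) ^ 2 ^ k := by
    rw [← rpow_natCast, Nat.cast_mul, Nat.cast_ofNat]
    exact four_mul_sq_div_rpow_le hσ zero_le_two k
  have hMk := hMp (k + 1) k.succ_pos
  rw [pow_succ' (2 : ℕ) k, pow_mul M] at hMk
  calc Mp (k + 1) * (1 + (k * K) ^ τ)
      ≤ ((4 * ((k + 1 : ℕ) : ℝ) ^ 2 / ρ) ^ (2 * τ * (k + 1 : ℕ)) *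
          (4 * ((k + 1 : ℕ) : ℝ) ^ 2 / σ) ^ (2 * (k + 1)) * (M ^ 2) ^ 2 ^ k) *
          (2 * (1 + K) ^ τ) ^ 2 ^ k :=
        mul_le_mul hMk (one_add_mul_rpow_le hK hτ k) (by positivity) (by positivity)
    _ ≤ (((16 / min ρ 1) ^ (4 * (2 * τ))) ^ 2 ^ k * ((16 / min σ 1) ^ (4 * 2 : ℝ)) ^ 2 ^ k *
          (M ^ 2) ^ 2 ^ k) * (2 * (1 + K) ^ τ) ^ 2 ^ k := by gcongr
    _ = _ := by simp only [mul_pow]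

lemma summable_and_tsum_le_of_le_pow_two_pow {t : ℕ → ℝ} {q : ℝ} (ht : ∀ k, 0 ≤ t k)
    (hq0 : 0 ≤ q) (hq : q ≤ 1 / 2) (htq : ∀ k, t k ≤ q ^ 2 ^ k) :
    Summable t ∧ ∑' k, t k ≤ 2 * q := by
  have hgeom : ∀ k, t k ≤ q * (1 / 2) ^ k := fun k =>
    calc t k ≤ q ^ 2 ^ k := htq k
      _ ≤ q ^ (k + 1) := pow_le_pow_of_le_one hq0 (by linarith) Nat.lt_two_pow_self
      _ ≤ q * (1 / 2) ^ k := by rw [pow_succ']; gcongr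
  have hs : Summable t := summable_geometric_two.mul_left q |>.of_nonneg_of_le ht hgeom
  refine ⟨hs, ?_⟩
  calc ∑' k, t k ≤ ∑' k : ℕ, q * (1 / 2) ^ k :=
        hs.tsum_le_tsum hgeom (summable_geometric_two.mul_left q)
    _ = 2 * q := by rw [tsum_mul_left, tsum_geometric_two, mul_comm]

section DecreasingBySteps

variable {u t : ℕ → ℝ}

lemma eq_sub_sum_range_of_succ_eq_sub (hu : ∀ k, u (k + 1) = u k - t k) (n : ℕ) :
    u n = u 0 - ∑ i ∈ range n, t i := by
  have hsum : ∑ i ∈ range n, t i = u 0 - u n := by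
    rw [← sum_range_sub' u n]
    exact sum_congr rfl fun i _ => by rw [hu]; ring
  linarith

lemma antitone_of_succ_eq_sub (hu : ∀ k, u (k + 1) = u k - t k) (ht : ∀ k, 0 ≤ t k) :
    Antitone u :=
  antitone_nat_of_succ_le fun k => by linarith [hu k, ht k]

lemma sub_tsum_le_of_succ_eq_sub (hu : ∀ k, u (k + 1) = u k - t k) (ht : ∀ k, 0 ≤ t k)
    (hs : Summable t) (n : ℕ) :
    u 0 - ∑' i, t i ≤ u n := by
  rw [eq_sub_sum_range_of_succ_eq_sub hu n]
  linarith [hs.sum_le_tsum (range n) fun i _ => ht i]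

lemma tendsto_sub_tsum_of_succ_eq_sub (hu : ∀ k, u (k + 1) = u k - t k) (hs : Summable t) :
    Tendsto u atTop (𝓝 (u 0 - ∑' i, t i)) := by
  refine (tendsto_const_nhds.sub hs.hasSum.tendsto_sum_nat).congr fun n => ?_
  exact (eq_sub_sum_range_of_succ_eq_sub hu n).symm

end DecreasingBySteps

/-- survival of the diophantine constant along the Kolmogorov
iteration: γ_p = γ_{p-1} - ε^{2^{p-1}} M_p (1 + ((p-1)K)^τ) stays ≥ γ/2,
is decreasing and converges to a positive limit, for ε > 0 small enough. -/
theorem stmt_9 (γ K τ ρ σ M : ℝ) (hγ : 0 < γ) (hK : 0 < K) (hτ : 0 < τ)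
    (hρ : 0 < ρ) (hσ : 0 < σ) (hM : 0 < M)
    (Mp : ℕ → ℝ) (hMp0 : ∀ p, 0 ≤ Mp p)
    (hMp : ∀ p : ℕ, 1 ≤ p →
      Mp p ≤ (4 * (p : ℝ) ^ 2 / ρ) ^ (2 * τ * p) * (4 * (p : ℝ) ^ 2 / σ) ^ (2 * p) *
        M ^ (2 ^ p)) :
    ∃ εstar : ℝ, 0 < εstar ∧ ∀ ε : ℝ, 0 < ε → ε < εstar →
      ∀ γs : ℕ → ℝ, γs 0 = γ →
        (∀ p : ℕ, 1 ≤ p →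
          γs p = γs (p - 1) - ε ^ (2 ^ (p - 1)) * Mp p *
            (1 + (((p : ℝ) - 1) * K) ^ τ)) →
        (Antitone γs ∧ (∀ p, γ / 2 ≤ γs p) ∧
          ∃ γinf : ℝ, 0 < γinf ∧ Tendsto γs atTop (nhds γinf)) := by
  obtain ⟨B, hB, hMpB⟩ := exists_pos_mul_le_pow_two_pow hK.le hτ.le hρ hσ hM.ne' hMp
  refine ⟨min (1 / 2) (γ / 4) / B, by positivity, fun ε hε hεB γs hγs0 hrec => ?_⟩
  set t : ℕ → ℝ := fun k => ε ^ 2 ^ k * Mp (k + 1) * (1 + (k * K) ^ τ)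
  have hstep : ∀ k, γs (k + 1) = γs k - t k := fun k => by simpa using hrec (k + 1) k.succ_pos
  have ht0 : ∀ k, 0 ≤ t k := fun k =>
    mul_nonneg (mul_nonneg (by positivity) (hMp0 _)) (by positivity)
  have htq : ∀ k, t k ≤ (ε * B) ^ 2 ^ k := fun k =>
    calc t k = ε ^ 2 ^ k * (Mp (k + 1) * (1 + (k * K) ^ τ)) := mul_assoc _ _ _
      _ ≤ ε ^ 2 ^ k * B ^ 2 ^ k := by gcongr; exact hMpB k
      _ = (ε * B) ^ 2 ^ k := (mul_pow _ _ _).symm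
  have hεB' : ε * B ≤ min (1 / 2) (γ / 4) := ((lt_div_iff₀ hB).1 hεB).le
  obtain ⟨hs, hsum⟩ := summable_and_tsum_le_of_le_pow_two_pow ht0 (by positivity)
    (hεB'.trans (min_le_left _ _)) htq
  have hS : ∑' k, t k ≤ γ / 2 := by linarith [min_le_right (1 / 2) (γ / 4)]
  refine ⟨antitone_of_succ_eq_sub hstep ht0, fun p => ?_, γ - ∑' k, t k, by linarith, ?_⟩
  · linarith [sub_tsum_le_of_succ_eq_sub hstep ht0 hs p]
  · simpa [hγs0] using tendsto_sub_tsum_of_succ_eq_sub hstep hs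
end

section
/- For f, g with ∫|f̂(s)| e^{σ|s|} ds < ∞ and ∫|ĝ(s)| e^{(σ-δ)|s|} ds < ∞, the Moyal bracket {f,g}_M satisfies, for any 0 < δ' < σ - δ: ∫|({f,g}_M)^∧(s)| e^{(σ-δ-δ')|s|} ds ≤ (e² δ'(δ+δ'))^{-1} (∫|f̂| e^{σ|s|}) (∫|ĝ| e^{(σ-δ)|s|}). -/
open Real Finset MeasureTheory Complex

/-- Euclidean norm of a phase-space point s = (v,w) ∈ ℝ^l × ℝ^l. -/
noncomputable def enorm11 (l : ℕ) (s : (Fin l → ℝ) × (Fin l → ℝ)) : ℝ :=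
  Real.sqrt (∑ i, s.1 i ^ 2 + ∑ i, s.2 i ^ 2)

/-- The symplectic wedge (v,w) ∧ (v¹,w¹) = ⟨w,v¹⟩ - ⟨v,w¹⟩. -/
def wedge11 (l : ℕ) (s t : (Fin l → ℝ) × (Fin l → ℝ)) : ℝ :=
  ∑ i, s.2 i * t.1 i - ∑ i, s.1 i * t.2 i

/-- The Fourier transform of the Moyal bracket:
({f,g}_M)^∧(s) = (2/ℏ) ∫ f̂(s¹) ĝ(s-s¹) sin(ℏ (s-s¹)∧s¹ / 2) ds¹. -/
noncomputable def moyalHat11 (l : ℕ) (ℏ : ℝ)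
    (fh gh : (Fin l → ℝ) × (Fin l → ℝ) → ℂ)
    (s : (Fin l → ℝ) × (Fin l → ℝ)) : ℂ :=
  (2 / ℏ : ℝ) * ∫ s₁ : (Fin l → ℝ) × (Fin l → ℝ),
    fh s₁ * gh (s - s₁) * (Real.sin (ℏ * wedge11 l (s - s₁) s₁ / 2) : ℝ)

/-!
The sine in the Moyal kernel costs no more than the Poisson kernel: `|(2/ℏ) sin (ℏ a / 2)| ≤ |a|`
and `|(s - s₁) ∧ s₁| ≤ |s - s₁| |s₁|`. Since `|s| ≤ |s₁| + |s - s₁|`, the weight `e^{(σ-δ-δ')|s|}`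
splits over the two factors, and `x e^{-c x} ≤ (e c)⁻¹` absorbs `|s₁|` into the loss
`e^{-(δ+δ')|s₁|}` of the weight of `f̂`, and `|s - s₁|` into the loss `e^{-δ'|s - s₁|}` of that of
`ĝ`. So the weighted bracket is bounded pointwise by the convolution of the weighted `|f̂|` and
`|ĝ|`, whose integral is the product of their integrals.
-/

open scoped Convolution

def phaseToEuclidean (l : ℕ) (s : (Fin l → ℝ) × (Fin l → ℝ)) :
    EuclideanSpace ℝ (Fin l ⊕ Fin l) :=
  WithLp.toLp 2 (Sum.elim s.1 s.2)

lemma phaseToEuclidean_add (l : ℕ) (s t : (Fin l → ℝ) × (Fin l → ℝ)) :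
    phaseToEuclidean l (s + t) = phaseToEuclidean l s + phaseToEuclidean l t := by
  ext (i | i) <;> rfl

lemma enorm11_eq_norm (l : ℕ) (s : (Fin l → ℝ) × (Fin l → ℝ)) :
    enorm11 l s = ‖phaseToEuclidean l s‖ := by
  simp [enorm11, phaseToEuclidean, EuclideanSpace.norm_eq, Fintype.sum_sum_type]

lemma enorm11_add_le (l : ℕ) (s t : (Fin l → ℝ) × (Fin l → ℝ)) :
    enorm11 l (s + t) ≤ enorm11 l s + enorm11 l t := by
  simpa only [enorm11_eq_norm, phaseToEuclidean_add] using norm_add_le _ _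

lemma wedge11_eq_inner (l : ℕ) (s t : (Fin l → ℝ) × (Fin l → ℝ)) :
    wedge11 l s t = inner ℝ (phaseToEuclidean l (s.2, -s.1)) (phaseToEuclidean l t) := by
  simp [wedge11, phaseToEuclidean, Fintype.sum_sum_type, PiLp.inner_apply, sub_eq_add_neg,
    mul_comm]

lemma abs_wedge11_le (l : ℕ) (s t : (Fin l → ℝ) × (Fin l → ℝ)) :
    |wedge11 l s t| ≤ enorm11 l s * enorm11 l t := by
  have hrot : enorm11 l (s.2, -s.1) = enorm11 l s := by simp [enorm11, add_comm]
  rw [wedge11_eq_inner, ← hrot, enorm11_eq_norm, enorm11_eq_norm]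
  exact abs_real_inner_le_norm _ _

lemma enorm11_nonneg (l : ℕ) (s : (Fin l → ℝ) × (Fin l → ℝ)) : 0 ≤ enorm11 l s :=
  Real.sqrt_nonneg _

lemma le_inv_mul_exp {c : ℝ} (hc : 0 < c) (x : ℝ) :
    x ≤ (Real.exp 1 * c)⁻¹ * Real.exp (c * x) := by
  have h : c * x ≤ Real.exp (-1) * Real.exp (c * x) := by
    have := mul_le_mul_of_nonneg_right (mul_exp_neg_le_exp_neg_one (c * x))
      (Real.exp_pos (c * x)).le
    rwa [mul_assoc, ← Real.exp_add, neg_add_cancel, Real.exp_zero, mul_one] at this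
  calc x = c⁻¹ * (c * x) := by field_simp
    _ ≤ c⁻¹ * (Real.exp (-1) * Real.exp (c * x)) := by gcongr
    _ = (Real.exp 1 * c)⁻¹ * Real.exp (c * x) := by rw [Real.exp_neg]; ring

lemma mul_mul_exp_le_of_le_add {a b r w α β : ℝ} (ha : 0 ≤ a) (hb : 0 ≤ b) (hr : r ≤ a + b)
    (hw : 0 ≤ w) (hα : 0 < α) (hβ : 0 < β) :
    a * b * Real.exp (w * r) ≤
      (Real.exp 1 ^ 2 * β * α)⁻¹ * Real.exp ((w + α) * a) * Real.exp ((w + β) * b) := by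
  have hexp_a := le_inv_mul_exp hα a
  have hexp_b := le_inv_mul_exp hβ b
  calc a * b * Real.exp (w * r) ≤ a * b * Real.exp (w * (a + b)) := by gcongr
    _ ≤ (Real.exp 1 * α)⁻¹ * Real.exp (α * a) * ((Real.exp 1 * β)⁻¹ * Real.exp (β * b)) *
          Real.exp (w * (a + b)) := by gcongr
    _ = (Real.exp 1 ^ 2 * β * α)⁻¹ * Real.exp ((w + α) * a) * Real.exp ((w + β) * b) := by
      simp only [mul_add, add_mul, Real.exp_add]; ring

lemma abs_two_div_mul_abs_sin_le (ℏ a : ℝ) : |2 / ℏ| * |Real.sin (ℏ * a / 2)| ≤ |a| := by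
  rcases eq_or_ne ℏ 0 with rfl | hℏ
  · simp
  calc |2 / ℏ| * |Real.sin (ℏ * a / 2)| ≤ |2 / ℏ| * |ℏ * a / 2| := by
        gcongr ?_ * ?_; exact abs_sin_le_abs
    _ = |a| := by rw [← abs_mul]; field_simp

instance (l : ℕ) : (volume : Measure ((Fin l → ℝ) × (Fin l → ℝ))).IsAddRightInvariant := by
  rw [Measure.volume_eq_prod]; infer_instance

noncomputable def expWeightedNorm (l : ℕ) (κ : ℝ) (fh : (Fin l → ℝ) × (Fin l → ℝ) → ℂ)
    (s : (Fin l → ℝ) × (Fin l → ℝ)) : ℝ :=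
  ‖fh s‖ * Real.exp (κ * enorm11 l s)

lemma moyal_integrand_mul_exp_le (l : ℕ) (ℏ σ δ δ' : ℝ) (hδδ' : 0 < δ + δ') (hδ' : 0 < δ')
    (hw : 0 ≤ σ - δ - δ') (fh gh : (Fin l → ℝ) × (Fin l → ℝ) → ℂ)
    (s t : (Fin l → ℝ) × (Fin l → ℝ)) :
    |2 / ℏ| * ‖fh t * gh (s - t) * (Real.sin (ℏ * wedge11 l (s - t) t / 2) : ℂ)‖ *
        Real.exp ((σ - δ - δ') * enorm11 l s) ≤
      (Real.exp 1 ^ 2 * δ' * (δ + δ'))⁻¹ *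
        (expWeightedNorm l σ fh t * expWeightedNorm l (σ - δ) gh (s - t)) := by
  have hsin : |2 / ℏ| * |Real.sin (ℏ * wedge11 l (s - t) t / 2)| ≤
      enorm11 l (s - t) * enorm11 l t :=
    (abs_two_div_mul_abs_sin_le ℏ _).trans (abs_wedge11_le l _ _)
  have htri : enorm11 l s ≤ enorm11 l t + enorm11 l (s - t) := by
    simpa using enorm11_add_le l t (s - t)
  have hweight := mul_mul_exp_le_of_le_add (enorm11_nonneg l t) (enorm11_nonneg l (s - t)) htri
    hw hδδ' hδ'
  rw [show σ - δ - δ' + (δ + δ') = σ by ring, show σ - δ - δ' + δ' = σ - δ by ring] at hweight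
  rw [norm_mul, norm_mul, Complex.norm_real, Real.norm_eq_abs]
  calc |2 / ℏ| * (‖fh t‖ * ‖gh (s - t)‖ * |Real.sin (ℏ * wedge11 l (s - t) t / 2)|) *
        Real.exp ((σ - δ - δ') * enorm11 l s)
      = ‖fh t‖ * ‖gh (s - t)‖ * (|2 / ℏ| * |Real.sin (ℏ * wedge11 l (s - t) t / 2)|) *
        Real.exp ((σ - δ - δ') * enorm11 l s) := by ring
    _ ≤ ‖fh t‖ * ‖gh (s - t)‖ * (enorm11 l (s - t) * enorm11 l t) *
        Real.exp ((σ - δ - δ') * enorm11 l s) := by gcongr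
    _ = ‖fh t‖ * ‖gh (s - t)‖ *
        (enorm11 l t * enorm11 l (s - t) * Real.exp ((σ - δ - δ') * enorm11 l s)) := by ring
    _ ≤ ‖fh t‖ * ‖gh (s - t)‖ * ((Real.exp 1 ^ 2 * δ' * (δ + δ'))⁻¹ *
        Real.exp (σ * enorm11 l t) * Real.exp ((σ - δ) * enorm11 l (s - t))) := by gcongr
    _ = _ := by simp only [expWeightedNorm]; ring

lemma norm_moyalHat11_mul_exp_le (l : ℕ) (ℏ σ δ δ' : ℝ) (hδδ' : 0 < δ + δ') (hδ' : 0 < δ')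
    (hw : 0 ≤ σ - δ - δ') (fh gh : (Fin l → ℝ) × (Fin l → ℝ) → ℂ)
    {s : (Fin l → ℝ) × (Fin l → ℝ)}
    (hs : ConvolutionExistsAt (expWeightedNorm l σ fh) (expWeightedNorm l (σ - δ) gh) s
      (ContinuousLinearMap.mul ℝ ℝ) volume) :
    ‖moyalHat11 l ℏ fh gh s‖ * Real.exp ((σ - δ - δ') * enorm11 l s) ≤
      (Real.exp 1 ^ 2 * δ' * (δ + δ'))⁻¹ *
        (expWeightedNorm l σ fh ⋆[ContinuousLinearMap.mul ℝ ℝ, volume]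
          expWeightedNorm l (σ - δ) gh) s := by
  have hint : Integrable fun t =>
      expWeightedNorm l σ fh t * expWeightedNorm l (σ - δ) gh (s - t) :=
    hs.integrable
  calc ‖moyalHat11 l ℏ fh gh s‖ * Real.exp ((σ - δ - δ') * enorm11 l s)
      ≤ ∫ t, |2 / ℏ| * ‖fh t * gh (s - t) * (Real.sin (ℏ * wedge11 l (s - t) t / 2) : ℂ)‖ *
          Real.exp ((σ - δ - δ') * enorm11 l s) := by
        rw [moyalHat11, norm_mul, Complex.norm_real, Real.norm_eq_abs, integral_mul_const,
          integral_const_mul]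
        gcongr
        exact norm_integral_le_integral_norm _
    _ ≤ ∫ t, (Real.exp 1 ^ 2 * δ' * (δ + δ'))⁻¹ *
          (expWeightedNorm l σ fh t * expWeightedNorm l (σ - δ) gh (s - t)) :=
        integral_mono_of_nonneg (ae_of_all _ fun t => by positivity) (hint.const_mul _)
          (ae_of_all _ (moyal_integrand_mul_exp_le l ℏ σ δ δ' hδδ' hδ' hw fh gh s))
    _ = _ := integral_const_mul _ _

theorem stmt_11_general (l : ℕ) (ℏ σ δ δ' : ℝ) (hδ : 0 ≤ δ)
    (hδ' : 0 < δ') (hδ'' : δ' < σ - δ)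
    (fh gh : (Fin l → ℝ) × (Fin l → ℝ) → ℂ)
    (hf : Integrable fun s => ‖fh s‖ * Real.exp (σ * enorm11 l s))
    (hg : Integrable fun s => ‖gh s‖ * Real.exp ((σ - δ) * enorm11 l s)) :
    (∫ s, ‖moyalHat11 l ℏ fh gh s‖ * Real.exp ((σ - δ - δ') * enorm11 l s)) ≤
      (Real.exp 1 ^ 2 * δ' * (δ + δ'))⁻¹ *
        (∫ s, ‖fh s‖ * Real.exp (σ * enorm11 l s)) *
        (∫ s, ‖gh s‖ * Real.exp ((σ - δ) * enorm11 l s)) := by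
  have hF : Integrable (expWeightedNorm l σ fh) := hf
  have hG : Integrable (expWeightedNorm l (σ - δ) gh) := hg
  calc (∫ s, ‖moyalHat11 l ℏ fh gh s‖ * Real.exp ((σ - δ - δ') * enorm11 l s))
      ≤ ∫ s, (Real.exp 1 ^ 2 * δ' * (δ + δ'))⁻¹ *
          (expWeightedNorm l σ fh ⋆[ContinuousLinearMap.mul ℝ ℝ, volume]
            expWeightedNorm l (σ - δ) gh) s :=
        integral_mono_of_nonneg (ae_of_all _ fun s => by positivity)
          ((hF.integrable_convolution _ hG).const_mul _)
          ((hF.ae_convolution_exists _ hG).mono fun s hs =>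
            norm_moyalHat11_mul_exp_le l ℏ σ δ δ' (by linarith) hδ' (by linarith) fh gh hs)
    _ = _ := by
      rw [integral_const_mul, integral_convolution _ hF hG, ContinuousLinearMap.mul_apply']
      exact (mul_assoc _ _ _).symm

/-- weighted L¹ estimate for the Moyal bracket on the Fourier side:
∫‖({f,g}_M)^∧(s)‖ e^{(σ-δ-δ')|s|} ds
  ≤ (e² δ'(δ+δ'))⁻¹ (∫‖f̂‖e^{σ|s|})(∫‖ĝ‖e^{(σ-δ)|s|}). -/
theorem stmt_11 (l : ℕ) (ℏ σ δ δ' : ℝ) (hℏ : 0 < ℏ) (hδ : 0 ≤ δ)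
    (hδ' : 0 < δ') (hδ'' : δ' < σ - δ)
    (fh gh : (Fin l → ℝ) × (Fin l → ℝ) → ℂ)
    (hf : Integrable fun s => ‖fh s‖ * Real.exp (σ * enorm11 l s))
    (hg : Integrable fun s => ‖gh s‖ * Real.exp ((σ - δ) * enorm11 l s)) :
    (∫ s, ‖moyalHat11 l ℏ fh gh s‖ * Real.exp ((σ - δ - δ') * enorm11 l s)) ≤
      (Real.exp 1 ^ 2 * δ' * (δ + δ'))⁻¹ *
        (∫ s, ‖fh s‖ * Real.exp (σ * enorm11 l s)) *
        (∫ s, ‖gh s‖ * Real.exp ((σ - δ) * enorm11 l s)) :=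
  stmt_11_general l ℏ σ δ δ' hδ hδ' hδ'' fh gh hf hg
end
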